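/- In the ring ℂ[a,b][[z]] of formal power series in z over the polynomial ring ℂ[a,b], define P_g for g ≥ 0 recursively by P₀ := 1 and, for g ≥ 1, P_g := (1/(2g+1))·(a+b)^{2g}/(24^g·g!) + ((a² − ab + b²)/(12(2g+1)))·P_{g−1}. Then ∑_{g≥0} P_g·z^{2g} = exp(z²(a+b)²/24) · ∑_{n≥0} ((−1)ⁿ/(2n+1)!!)·(ab/4)ⁿ·z^{2n}. -/
import Mathlib

noncomputable section

namespace RiemannPaper15

/-- ℂ[a,b] -/
abbrev R2 : Type := MvPolynomial (Fin 2) ℂ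

def va : R2 := MvPolynomial.X 0
def vb : R2 := MvPolynomial.X 1

/-- P₀ = 1 and P_g = (1/(2g+1))·(a+b)^{2g}/(24^g·g!) + ((a²−ab+b²)/(12(2g+1)))·P_{g−1} -/
def Pg : ℕ → R2
  | 0 => 1
  | (g+1) =>
      (((2*(g+1)+1 : ℕ) : ℂ) * ((24 : ℂ) ^ (g+1)) * (((g+1).factorial : ℕ) : ℂ))⁻¹ •
        (va + vb) ^ (2*(g+1))
      + (((12 : ℂ) * ((2*(g+1)+1 : ℕ) : ℂ))⁻¹) • ((va^2 - va*vb + vb^2) * Pg g)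

open Finset

def Mon (g i : ℕ) : R2 := (va + vb) ^ (2*i) * (va * vb) ^ (g - i)

def cf (g i : ℕ) : ℂ :=
  (-1)^(g-i) * (((i.factorial : ℕ) : ℂ) * 24^i * 4^(g-i) *
    (((2*(g-i)+1).doubleFactorial : ℕ) : ℂ))⁻¹

def Q (g : ℕ) : R2 := ∑ i ∈ range (g+1), cf g i • Mon g i

def cc1 (g : ℕ) : ℂ := (((2*(g+1)+1 : ℕ) : ℂ) * ((24 : ℂ) ^ (g+1)) * (((g+1).factorial : ℕ) : ℂ))⁻¹
def cc2 (g : ℕ) : ℂ := ((12 : ℂ) * ((2*(g+1)+1 : ℕ) : ℂ))⁻¹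

lemma dF_ne (n : ℕ) : ((n.doubleFactorial : ℕ) : ℂ) ≠ 0 :=
  Nat.cast_ne_zero.mpr (Nat.doubleFactorial_pos n).ne'

lemma fact_ne (n : ℕ) : ((n.factorial : ℕ) : ℂ) ≠ 0 :=
  Nat.cast_ne_zero.mpr n.factorial_ne_zero

lemma cast_ne (n : ℕ) (h : n ≠ 0) : (n : ℂ) ≠ 0 := Nat.cast_ne_zero.mpr h

lemma L1 (g : ℕ) : cc1 g + cc2 g * cf g g = cf (g+1) (g+1) := by
  simp only [cc1, cc2, cf, Nat.sub_self, pow_zero, one_mul, Nat.doubleFactorial, Nat.cast_one,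
    mul_one]
  have h1 := fact_ne g
  have h3 : (2*(g:ℂ)+3) ≠ 0 := by
    have := cast_ne (2*g+3) (by omega); push_cast at this; convert this using 2 <;> ring
  have h6 : ((g:ℂ)+1) ≠ 0 := by
    have := cast_ne (g+1) (by omega); push_cast at this; exact this
  have hN : ((2*(g+1)+1 : ℕ) : ℂ) = 2*(g:ℂ)+3 := by push_cast; ring
  have hF : (((g+1).factorial : ℕ) : ℂ) = ((g:ℂ)+1) * ((g.factorial : ℕ) : ℂ) := by
    rw [Nat.factorial_succ]; push_cast; ring
  rw [hN, hF, pow_succ]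
  have hT : ((24:ℂ)^g) ≠ 0 := pow_ne_zero _ (by norm_num)
  have hp : (2*(g:ℂ)+3) * (2*(g:ℂ)+3)⁻¹ = 1 := mul_inv_cancel₀ h3
  have hq : ((g:ℂ)+1) * ((g:ℂ)+1)⁻¹ = 1 := mul_inv_cancel₀ h6
  simp only [mul_inv]
  linear_combination ((((g.factorial:ℕ):ℂ))⁻¹ * ((24:ℂ)^g)⁻¹ / 24) *
    (((g:ℂ)+1)⁻¹ * hp - 2 * (2*(g:ℂ)+3)⁻¹ * hq)

lemma L2 (g : ℕ) : (0:ℂ) - 3 * cc2 g * cf g 0 = cf (g+1) 0 := by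
  simp only [cc2, cf, Nat.sub_zero, Nat.factorial_zero, pow_zero, Nat.cast_one, one_mul]
  have hd := dF_ne (2*g+1)
  have h3 : (2*(g:ℂ)+3) ≠ 0 := by
    have := cast_ne (2*g+3) (by omega); push_cast at this; convert this using 2 <;> ring
  have hN : ((2*(g+1)+1 : ℕ) : ℂ) = 2*(g:ℂ)+3 := by push_cast; ring
  have hD : (((2*(g+1)+1).doubleFactorial : ℕ) : ℂ)
      = (2*(g:ℂ)+3) * (((2*g+1).doubleFactorial : ℕ) : ℂ) := by
    have h : 2*(g+1)+1 = (2*g+1)+2 := by omega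
    rw [h, Nat.doubleFactorial_add_two]; push_cast; ring
  rw [hN, hD, pow_succ, pow_succ]
  have hp : (2*(g:ℂ)+3) * (2*(g:ℂ)+3)⁻¹ = 1 := mul_inv_cancel₀ h3
  simp only [mul_inv]
  linear_combination (-(3:ℂ)/12 * (-1:ℂ)^g * ((4:ℂ)^g)⁻¹ *
    ((((2*g+1).doubleFactorial:ℕ):ℂ))⁻¹ * (2*(g:ℂ)+3)⁻¹ * 0) + 0 * hp

lemma L3 (j k : ℕ) :
    cc2 (k+j+1) * cf (k+j+1) k - 3 * cc2 (k+j+1) * cf (k+j+1) (k+1) = cf (k+j+2) (k+1) := by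
  have e1 : k+j+1 - k = j+1 := by omega
  have e2 : k+j+1 - (k+1) = j := by omega
  have e3 : k+j+2 - (k+1) = j+1 := by omega
  simp only [cc2, cf, e1, e2, e3]
  have hfk := fact_ne k
  have hd := dF_ne (2*j+1)
  have h3 : (2*((k:ℂ)+(j:ℂ))+5) ≠ 0 := by
    have := cast_ne (2*(k+j)+5) (by omega); push_cast at this; convert this using 2 <;> ring
  have h6 : ((k:ℂ)+1) ≠ 0 := by
    have := cast_ne (k+1) (by omega); push_cast at this; exact this
  have h7 : (2*(j:ℂ)+3) ≠ 0 := by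
    have := cast_ne (2*j+3) (by omega); push_cast at this; convert this using 2 <;> ring
  have hN : ((2*(k+j+1+1)+1 : ℕ) : ℂ) = 2*((k:ℂ)+(j:ℂ))+5 := by push_cast; ring
  have hD : (((2*(j+1)+1).doubleFactorial : ℕ) : ℂ)
      = (2*(j:ℂ)+3) * (((2*j+1).doubleFactorial : ℕ) : ℂ) := by
    have h : 2*(j+1)+1 = (2*j+1)+2 := by omega
    rw [h, Nat.doubleFactorial_add_two]; push_cast; ring
  have hF : (((k+1).factorial : ℕ) : ℂ) = ((k:ℂ)+1) * ((k.factorial : ℕ) : ℂ) := by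
    rw [Nat.factorial_succ]; push_cast; ring
  rw [hN, hD, hF, pow_succ (4:ℂ) j, pow_succ (24:ℂ) k, pow_succ (-1:ℂ) j]
  have hp : (2*((k:ℂ)+(j:ℂ))+5) * (2*((k:ℂ)+(j:ℂ))+5)⁻¹ = 1 := mul_inv_cancel₀ h3
  have hq : ((k:ℂ)+1) * ((k:ℂ)+1)⁻¹ = 1 := mul_inv_cancel₀ h6
  have hr : (2*(j:ℂ)+3) * (2*(j:ℂ)+3)⁻¹ = 1 := mul_inv_cancel₀ h7
  simp only [mul_inv]
  linear_combination (-((-1:ℂ)^j) * (((k.factorial:ℕ):ℂ))⁻¹ * ((24:ℂ)^k)⁻¹ * ((4:ℂ)^j)⁻¹ *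
      ((((2*j+1).doubleFactorial:ℕ):ℂ))⁻¹ / 96) *
    ( (((k:ℂ)+1)⁻¹*(2*(j:ℂ)+3)⁻¹) * hp - 2*((2*((k:ℂ)+(j:ℂ))+5)⁻¹*(2*(j:ℂ)+3)⁻¹) * hq
      - ((2*((k:ℂ)+(j:ℂ))+5)⁻¹*((k:ℂ)+1)⁻¹) * hr )

lemma smul3 (x : R2) : (3:ℂ) • x = 3 * x := by
  rw [MvPolynomial.smul_eq_C_mul, map_ofNat]

lemma hCM (g i : ℕ) (h : i ≤ g) :
    (va^2 - va*vb + vb^2) * Mon g i = Mon (g+1) (i+1) - (3:ℂ) • Mon (g+1) i := by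
  rw [smul3]
  obtain ⟨j, rfl⟩ := Nat.exists_eq_add_of_le h
  simp only [Mon, Nat.add_sub_cancel_left, show i+j+1-(i+1) = j by omega,
    show i+j+1-i = j+1 by omega]
  ring

lemma Pg_eq_Q (g : ℕ) : Pg g = Q g := by
  induction g with
  | zero => simp [Pg, Q, Mon, cf]
  | succ g ih =>
    rw [show Pg (g+1) = cc1 g • (va + vb) ^ (2*(g+1))
        + cc2 g • ((va^2 - va*vb + vb^2) * Pg g) from rfl, ih]
    have step1 : (va^2 - va*vb + vb^2) * Q g
        = ∑ i ∈ range (g+1), cf g i • (Mon (g+1) (i+1) - (3:ℂ) • Mon (g+1) i) := by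
      rw [Q, Finset.mul_sum]
      refine Finset.sum_congr rfl fun i hi => ?_
      rw [mul_smul_comm, hCM g i (Nat.lt_succ_iff.mp (mem_range.mp hi))]
    rw [step1, Finset.smul_sum]
    have step2 : ∀ i, cc2 g • (cf g i • (Mon (g+1) (i+1) - (3:ℂ) • Mon (g+1) i))
        = (cc2 g * cf g i) • Mon (g+1) (i+1) - (3 * cc2 g * cf g i) • Mon (g+1) i := by
      intro i; module
    simp only [step2]
    rw [Finset.sum_sub_distrib]
    rw [Finset.sum_range_succ (fun i => (cc2 g * cf g i) • Mon (g+1) (i+1)),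
        Finset.sum_range_succ' (fun i => (3 * cc2 g * cf g i) • Mon (g+1) i)]
    have hM : (va + vb) ^ (2*(g+1)) = Mon (g+1) (g+1) := by
      simp [Mon, Nat.sub_self]
    rw [hM, Q, Finset.sum_range_succ (fun k => cf (g+1) k • Mon (g+1) k),
        Finset.sum_range_succ' (fun k => cf (g+1) k • Mon (g+1) k)]
    rw [← L1 g, ← L2 g]
    have hcong : ∑ i ∈ range g, cf (g+1) (i+1) • Mon (g+1) (i+1)
        = ∑ i ∈ range g, ((cc2 g * cf g i) • Mon (g+1) (i+1)
            - (3 * cc2 g * cf g (i+1)) • Mon (g+1) (i+1)) := by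
      refine Finset.sum_congr rfl fun i hi => ?_
      have hi' : i < g := mem_range.mp hi
      obtain ⟨j, rfl⟩ : ∃ j, g = i + j + 1 := ⟨g - i - 1, by omega⟩
      rw [← L3 j i, sub_smul]
    rw [hcong, Finset.sum_sub_distrib, add_smul, sub_smul]
    simp only [zero_smul, zero_sub]
    abel

lemma hterm (i j : ℕ) :
    (((((i.factorial : ℕ) : ℂ))⁻¹ • ((24 : ℂ)⁻¹ • (va + vb) ^ 2) ^ i) *
      ((((-1 : ℂ) ^ j) * ((((2*j+1).doubleFactorial : ℕ) : ℂ))⁻¹) • ((4 : ℂ)⁻¹ • (va * vb)) ^ j))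
    = cf (i+j) i • Mon (i+j) i := by
  rw [smul_pow, smul_pow, smul_smul, smul_smul, smul_mul_smul_comm, ← pow_mul]
  have h1 : i + j - i = j := by omega
  congr 1
  · simp only [cf, h1, mul_inv, inv_pow]
    ring
  · simp only [Mon, h1]

/-- Lemma (in proof of Theorem 4.3):
∑_{g≥0} P_g z^{2g} = exp(z²(a+b)²/24) · ∑_{n≥0} ((−1)ⁿ/(2n+1)!!)(ab/4)ⁿ z^{2n}. -/
theorem stmt15 :
    (PowerSeries.mk fun m => if m % 2 = 0 then Pg (m / 2) else 0 : PowerSeries R2) =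
      (PowerSeries.mk fun m =>
        if m % 2 = 0 then
          ((((m / 2).factorial : ℕ) : ℂ))⁻¹ • ((24 : ℂ)⁻¹ • (va + vb) ^ 2) ^ (m / 2)
        else 0) *
      (PowerSeries.mk fun m =>
        if m % 2 = 0 then
          (((-1 : ℂ) ^ (m / 2)) * ((((2*(m/2)+1).doubleFactorial : ℕ) : ℂ))⁻¹) •
            ((4 : ℂ)⁻¹ • (va * vb)) ^ (m / 2)
        else 0) := by
  refine PowerSeries.ext fun m => ?_
  rw [PowerSeries.coeff_mk, PowerSeries.coeff_mul,
    Finset.Nat.sum_antidiagonal_eq_sum_range_succ_mk]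
  simp only [PowerSeries.coeff_mk]
  by_cases hm : m % 2 = 0
  · obtain ⟨g, rfl⟩ : ∃ g, m = 2*g := ⟨m/2, by omega⟩
    rw [if_pos hm, show 2*g/2 = g by omega]
    have hzero : ∀ k ∈ range (2*g+1), k ∉ (range (g+1)).image (fun i => 2*i) →
        ((if k % 2 = 0 then
            ((((k / 2).factorial : ℕ) : ℂ))⁻¹ • ((24 : ℂ)⁻¹ • (va + vb) ^ 2) ^ (k / 2)
          else 0) *
         (if (2*g-k) % 2 = 0 then
            (((-1 : ℂ) ^ ((2*g-k) / 2)) * ((((2*((2*g-k)/2)+1).doubleFactorial : ℕ) : ℂ))⁻¹) •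
              ((4 : ℂ)⁻¹ • (va * vb)) ^ ((2*g-k) / 2)
          else 0)) = 0 := by
      intro k hk hnk
      have hk' : k < 2*g+1 := mem_range.mp hk
      have hodd : k % 2 = 1 := by
        by_contra h
        exact hnk (Finset.mem_image.mpr ⟨k/2, mem_range.mpr (by omega), by omega⟩)
      rw [if_neg (by omega), zero_mul]
    have hsub : (range (g+1)).image (fun i => 2*i) ⊆ range (2*g+1) := by
      intro k hk
      obtain ⟨i, hi, rfl⟩ := Finset.mem_image.mp hk
      exact mem_range.mpr (by have := mem_range.mp hi; omega)
    rw [← Finset.sum_subset hsub hzero,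
      Finset.sum_image (fun x _ y _ h => by omega : ∀ x ∈ range (g+1), ∀ y ∈ range (g+1),
        2*x = 2*y → x = y)]
    rw [Pg_eq_Q, Q]
    refine Finset.sum_congr rfl fun i hi => ?_
    have hig : i ≤ g := by have := mem_range.mp hi; omega
    have e1 : (2*i) % 2 = 0 := by omega
    have e2 : (2*i)/2 = i := by omega
    have e3 : (2*g - 2*i) % 2 = 0 := by omega
    have e4 : (2*g - 2*i)/2 = g - i := by omega
    rw [if_pos e1, if_pos e3, e2, e4, hterm i (g-i), show i + (g-i) = g by omega]
  · rw [if_neg hm]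
    refine (Finset.sum_eq_zero fun k hk => ?_).symm
    have hk' : k < m+1 := mem_range.mp hk
    by_cases hke : k % 2 = 0
    · rw [if_neg (show ¬ (m-k) % 2 = 0 by omega), mul_zero]
    · rw [if_neg hke, zero_mul]

end RiemannPaper15
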